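/- arXiv:1706.05510 — 2 statements merged into one kernel-verified Lean document; each statement's English description precedes it below -/
import Mathlib

section
/- If the conditional mean function is linear, i.e., E[X | Y = y] = α + γ y for constants α, γ and all y in the range of Y, and if Var[Y] is finite and nonzero, Cov[X,Y] is finite, and Cov[Y, w∘F_Y(Y)] is finite and nonzero for a weight function w, then the weighted-Gini beta Cov[X, w∘F_Y(Y)]/Cov[Y, w∘F_Y(Y)] equals the classical beta Cov[X,Y]/Var[Y], and both equal γ. -/
open MeasureTheory ProbabilityTheory Filter Set

/-- The mean of a real random variable. -/
noncomputable def rvMean {Ω : Type*} [MeasureSpace Ω] (X : Ω → ℝ) : ℝ := ∫ ω, X ω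

/-- The covariance of two real random variables. -/
noncomputable def rvCov {Ω : Type*} [MeasureSpace Ω] (X Y : Ω → ℝ) : ℝ :=
  ∫ ω, (X ω - rvMean X) * (Y ω - rvMean Y)

/-- The cumulative distribution function of a real random variable. -/
noncomputable def rvCdf {Ω : Type*} [MeasureSpace Ω] (Y : Ω → ℝ) (y : ℝ) : ℝ :=
  (ℙ {ω | Y ω ≤ y}).toReal

/-!
If `E[X | Y] = α + γ Y`, then for every `σ(Y)`-measurable `V` the pull-out property gives
`E[X V] = E[(α + γ Y) V] = α E[V] + γ E[Y V]`, hence `Cov(X, V) = γ Cov(Y, V)`. Taking `V = Y`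
and `V = w (F_Y(Y))` shows that both betas equal `γ`.
-/

section PullOut

variable {Ω : Type*} {m m₀ : MeasurableSpace Ω} {μ : Measure Ω} {Z V : Ω → ℝ}

theorem integrable_condExp_mul_of_stronglyMeasurable (hV : StronglyMeasurable[m] V)
    (hZV : Integrable (Z * V) μ) (hZ : Integrable Z μ) : Integrable (μ[Z | m] * V) μ :=
  integrable_condExp.congr (condExp_mul_of_stronglyMeasurable_right hV hZV hZ)

theorem integral_mul_eq_integral_condExp_mul (hm : m ≤ m₀) [SigmaFinite (μ.trim hm)]
    (hV : StronglyMeasurable[m] V) (hZV : Integrable (Z * V) μ) (hZ : Integrable Z μ) :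
    ∫ ω, Z ω * V ω ∂μ = ∫ ω, (μ[Z | m]) ω * V ω ∂μ :=
  (integral_condExp hm).symm.trans
    (integral_congr_ae (condExp_mul_of_stronglyMeasurable_right hV hZV hZ))

end PullOut

section LinearRegression

variable {Ω : Type*} [MeasureSpace Ω] {X Y V : Ω → ℝ} {α γ : ℝ}

theorem monotone_rvCdf (Y : Ω → ℝ) [IsFiniteMeasure (ℙ : Measure Ω)] : Monotone (rvCdf Y) :=
  fun _ _ hab ↦ ENNReal.toReal_mono (measure_ne_top _ _)
    (measure_mono fun _ h ↦ le_trans h hab)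

/-- If `V` is not integrable, `rvMean V` is the junk value `0`; the identity then survives
because `hmV` forces `rvMean X = 0`. -/
theorem rvCov_eq_integral_mul_sub [IsProbabilityMeasure (ℙ : Measure Ω)] (hX : Integrable X)
    (hXV : Integrable (fun ω ↦ X ω * V ω)) (hmV : Integrable (fun ω ↦ rvMean X * V ω)) :
    rvCov X V = (∫ ω, X ω * V ω) - rvMean X * rvMean V := by
  have hexpand : ∀ ω, (X ω - rvMean X) * (V ω - rvMean V)
      = X ω * V ω - rvMean X * V ω - rvMean V * X ω + rvMean X * rvMean V := fun ω ↦ by ring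
  have h₁ : Integrable (fun ω ↦ X ω * V ω - rvMean X * V ω) := hXV.sub hmV
  have h₂ : Integrable (fun ω ↦ X ω * V ω - rvMean X * V ω - rvMean V * X ω) :=
    h₁.sub (hX.const_mul _)
  simp only [rvCov, hexpand]
  rw [integral_add h₂ (integrable_const _), integral_sub h₁ (hX.const_mul _),
    integral_sub hXV hmV, integral_const_mul,
    integral_const_mul, integral_const, probReal_univ, one_smul]
  simp only [rvMean]
  ring

theorem integrable_rvMean_mul_of_rvCov_ne_zero [IsFiniteMeasure (ℙ : Measure Ω)]
    (hY : Integrable Y) (hYV : Integrable (fun ω ↦ Y ω * V ω)) (hcov : rvCov Y V ≠ 0) :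
    Integrable (fun ω ↦ rvMean Y * V ω) := by
  have hcovint : Integrable (fun ω ↦ (Y ω - rvMean Y) * (V ω - rvMean V)) := by
    by_contra h
    exact hcov (integral_undef h)
  refine ((hYV.sub (hY.const_mul (rvMean V))).add (integrable_const (rvMean Y * rvMean V))
    |>.sub hcovint).congr (Eventually.of_forall fun ω ↦ ?_)
  simp only [Pi.add_apply, Pi.sub_apply]
  ring

theorem rvMean_eq_of_condExp_eq_linear [IsProbabilityMeasure (ℙ : Measure Ω)]
    (hY : Measurable Y)
    (hlin : (ℙ : Measure Ω)[X | MeasurableSpace.comap Y inferInstance] =ᵐ[ℙ] fun ω ↦ α + γ * Y ω)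
    (hYint : Integrable Y) : rvMean X = α + γ * rvMean Y := by
  rw [rvMean, ← integral_condExp hY.comap_le, integral_congr_ae hlin,
    integral_add (integrable_const α) (hYint.const_mul γ), integral_const, integral_const_mul,
    probReal_univ, one_smul, rvMean]

theorem integrable_const_mul_of_condExp_eq_linear
    (hlin : (ℙ : Measure Ω)[X | MeasurableSpace.comap Y inferInstance] =ᵐ[ℙ] fun ω ↦ α + γ * Y ω)
    (hX : Integrable X) (hV : Measurable[MeasurableSpace.comap Y inferInstance] V)
    (hXV : Integrable (fun ω ↦ X ω * V ω)) (hYV : Integrable (fun ω ↦ Y ω * V ω)) :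
    Integrable (fun ω ↦ α * V ω) := by
  have hlinV : Integrable (fun ω ↦ (α + γ * Y ω) * V ω) :=
    (integrable_condExp_mul_of_stronglyMeasurable hV.stronglyMeasurable hXV hX).congr
      (hlin.mul (EventuallyEq.refl _ V))
  refine (hlinV.sub (hYV.const_mul γ)).congr (Eventually.of_forall fun ω ↦ ?_)
  simp only [Pi.sub_apply]
  ring

theorem integral_mul_of_condExp_eq_linear [IsFiniteMeasure (ℙ : Measure Ω)]
    (hY : Measurable Y)
    (hlin : (ℙ : Measure Ω)[X | MeasurableSpace.comap Y inferInstance] =ᵐ[ℙ] fun ω ↦ α + γ * Y ω)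
    (hX : Integrable X) (hV : Measurable[MeasurableSpace.comap Y inferInstance] V)
    (hXV : Integrable (fun ω ↦ X ω * V ω)) (hYV : Integrable (fun ω ↦ Y ω * V ω)) :
    ∫ ω, X ω * V ω = α * (∫ ω, V ω) + γ * ∫ ω, Y ω * V ω := by
  have hαV := integrable_const_mul_of_condExp_eq_linear hlin hX hV hXV hYV
  calc ∫ ω, X ω * V ω
      = ∫ ω, (α + γ * Y ω) * V ω :=
        (integral_mul_eq_integral_condExp_mul hY.comap_le hV.stronglyMeasurable hXV hX).trans
          (integral_congr_ae (hlin.mul (EventuallyEq.refl _ V)))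
    _ = ∫ ω, (α * V ω + γ * (Y ω * V ω)) := by congr 1; ext ω; ring
    _ = α * (∫ ω, V ω) + γ * ∫ ω, Y ω * V ω := by
        rw [integral_add hαV (hYV.const_mul γ), integral_const_mul, integral_const_mul]

theorem rvCov_eq_mul_rvCov_of_condExp_eq_linear [IsProbabilityMeasure (ℙ : Measure Ω)]
    (hY : Measurable Y)
    (hlin : (ℙ : Measure Ω)[X | MeasurableSpace.comap Y inferInstance] =ᵐ[ℙ] fun ω ↦ α + γ * Y ω)
    (hX : Integrable X) (hYint : Integrable Y)
    (hV : Measurable[MeasurableSpace.comap Y inferInstance] V)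
    (hXV : Integrable (fun ω ↦ X ω * V ω)) (hYV : Integrable (fun ω ↦ Y ω * V ω))
    (hmV : Integrable (fun ω ↦ rvMean Y * V ω)) :
    rvCov X V = γ * rvCov Y V := by
  have hmean := rvMean_eq_of_condExp_eq_linear hY hlin hYint
  have hmXV : Integrable (fun ω ↦ rvMean X * V ω) := by
    rw [hmean]
    refine ((integrable_const_mul_of_condExp_eq_linear hlin hX hV hXV hYV).add
      (hmV.const_mul γ)).congr (Eventually.of_forall fun ω ↦ ?_)
    simp only [Pi.add_apply]
    ring
  rw [rvCov_eq_integral_mul_sub hX hXV hmXV, rvCov_eq_integral_mul_sub hYint hYV hmV,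
    integral_mul_of_condExp_eq_linear hY hlin hX hV hXV hYV, hmean]
  simp only [rvMean]
  ring

end LinearRegression

theorem stmt_0_general {Ω : Type*} [MeasureSpace Ω] [IsProbabilityMeasure (ℙ : Measure Ω)]
    (X Y : Ω → ℝ) (hY : Measurable Y)
    (w : ℝ → ℝ) (hw : Measurable w)
    (α γ : ℝ)
    (hlin : (ℙ : Measure Ω)[X | MeasurableSpace.comap Y inferInstance]
      =ᵐ[ℙ] fun ω => α + γ * Y ω)
    (hXint : Integrable X)
    (hY2int : Integrable (fun ω => Y ω ^ 2))
    (hXYint : Integrable (fun ω => X ω * Y ω))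
    (hXWint : Integrable (fun ω => X ω * w (rvCdf Y (Y ω))))
    (hYWint : Integrable (fun ω => Y ω * w (rvCdf Y (Y ω))))
    (hvar : rvCov Y Y ≠ 0)
    (hcovG : rvCov Y (fun ω => w (rvCdf Y (Y ω))) ≠ 0) :
    rvCov X (fun ω => w (rvCdf Y (Y ω))) / rvCov Y (fun ω => w (rvCdf Y (Y ω)))
      = rvCov X Y / rvCov Y Y ∧
    rvCov X Y / rvCov Y Y = γ := by
  have hYint : Integrable Y :=
    ((memLp_two_iff_integrable_sq hY.aestronglyMeasurable).2 hY2int).integrable one_le_two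
  have hYm : Measurable[MeasurableSpace.comap Y inferInstance] Y := comap_measurable Y
  have hWm : Measurable[MeasurableSpace.comap Y inferInstance] fun ω ↦ w (rvCdf Y (Y ω)) :=
    (hw.comp (monotone_rvCdf Y).measurable).comp hYm
  have hbeta : rvCov X Y = γ * rvCov Y Y :=
    rvCov_eq_mul_rvCov_of_condExp_eq_linear hY hlin hXint hYint hYm hXYint
      (by simpa only [sq] using hY2int) (hYint.const_mul _)
  have hbetaG : rvCov X (fun ω ↦ w (rvCdf Y (Y ω))) = γ * rvCov Y (fun ω ↦ w (rvCdf Y (Y ω))) :=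
    rvCov_eq_mul_rvCov_of_condExp_eq_linear hY hlin hXint hYint hWm hXWint hYWint
      (integrable_rvMean_mul_of_rvCov_ne_zero hYint hYWint hcovG)
  rw [hbeta, hbetaG, mul_div_cancel_right₀ _ hvar, mul_div_cancel_right₀ _ hcovG]
  exact ⟨rfl, rfl⟩

/-- If the conditional mean function is linear, `E[X | Y] = α + γ Y`, and the relevant
covariances are finite (integrable), with `Var[Y] ≠ 0` and `Cov[Y, w∘F_Y(Y)] ≠ 0`, then the
weighted-Gini beta equals the classical beta, and both equal `γ`. -/
theorem stmt_0 {Ω : Type*} [MeasureSpace Ω] [IsProbabilityMeasure (ℙ : Measure Ω)]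
    (X Y : Ω → ℝ) (hX : Measurable X) (hY : Measurable Y)
    (w : ℝ → ℝ) (hw : Measurable w)
    (α γ : ℝ)
    (hlin : (ℙ : Measure Ω)[X | MeasurableSpace.comap Y inferInstance]
      =ᵐ[ℙ] fun ω => α + γ * Y ω)
    (hXint : Integrable X)
    (hY2int : Integrable (fun ω => Y ω ^ 2))
    (hXYint : Integrable (fun ω => X ω * Y ω))
    (hXWint : Integrable (fun ω => X ω * w (rvCdf Y (Y ω))))
    (hYWint : Integrable (fun ω => Y ω * w (rvCdf Y (Y ω))))
    (hvar : rvCov Y Y ≠ 0)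
    (hcovG : rvCov Y (fun ω => w (rvCdf Y (Y ω))) ≠ 0) :
    rvCov X (fun ω => w (rvCdf Y (Y ω))) / rvCov Y (fun ω => w (rvCdf Y (Y ω)))
      = rvCov X Y / rvCov Y Y ∧
    rvCov X Y / rvCov Y Y = γ :=
  stmt_0_general X Y hY w hw α γ hlin hXint hY2int hXYint hXWint hYWint hvar hcovG
end

section
/- Let (X_i, Y_i), i ≥ 1, be i.i.d. copies of (X, Y) with E[X], E[Y²], E[XY] finite, and let w : [0,1] → ℝ be continuous. With F̂_n(y) = (1/(n+1)) Σ_{k=1}^n 1{Y_k ≤ y}, the average (1/n) Σ_{k=1}^n w(F̂_n(Y_k)) converges almost surely to E[w(F_Y(Y))] as n → ∞. -/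
open MeasureTheory ProbabilityTheory Filter Set Topology

/-- The modified empirical distribution function with jumps of size `1/(n+1)`. -/
noncomputable def empCdf {Ω : Type*} (Y : ℕ → Ω → ℝ) (n : ℕ) (ω : Ω) (y : ℝ) : ℝ :=
  (∑ k ∈ Finset.range n, if Y k ω ≤ y then (1 : ℝ) else 0) / ((n : ℝ) + 1)


/-!
Glivenko–Cantelli followed by uniform continuity. By the strong law, the empirical frequencies
of the half-lines `Iic q` and `Iio q` converge almost surely simultaneously at the countably many
quantiles `q` of the levels `j / m`. Between consecutive such quantiles the cdf rises by at most
`1 / m`, so monotonicity sandwiches `F̂_n(y) - F_Y(y)` between errors at these finitely many points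
(Pólya's argument), and `F̂_n → F_Y` uniformly almost surely. Uniform continuity of `w` on `[0,1]`
then makes `(1/n) Σ w(F̂_n(Y_k))` asymptotically equal to `(1/n) Σ w(F_Y(Y_k))`, which converges
to `E[w(F_Y(Y))]` by the strong law of large numbers.
-/

namespace ProbabilityTheory

variable {μ : Measure ℝ} {c x : ℝ}

/-- Only meaningful for `0 < c < 1`: otherwise the infimum may be over an empty or unbounded set. -/
noncomputable def quantile (μ : Measure ℝ) (c : ℝ) : ℝ := sInf {x | c ≤ cdf μ x}

lemma bddBelow_setOf_le_cdf (hc : 0 < c) : BddBelow {x | c ≤ cdf μ x} := by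
  obtain ⟨a, ha⟩ := eventually_atBot.mp ((tendsto_cdf_atBot μ).eventually (gt_mem_nhds hc))
  exact ⟨a, fun x hx => le_of_not_gt fun hxa => (ha x hxa.le).not_ge hx⟩

lemma quantile_le (hc : 0 < c) (hx : c ≤ cdf μ x) : quantile μ c ≤ x :=
  csInf_le (bddBelow_setOf_le_cdf hc) hx

lemma le_cdf_quantile (hx : c ≤ cdf μ x) : c ≤ cdf μ (quantile μ c) := by
  refine ge_of_tendsto ((cdf μ).right_continuous _ |>.mono Ioi_subset_Ici_self)
    (eventually_nhdsWithin_of_forall fun y hy => ?_)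
  obtain ⟨z, hz, hzy⟩ := exists_lt_of_csInf_lt ⟨x, hx⟩ (mem_Ioi.mp hy)
  exact hz.trans (monotone_cdf μ hzy.le)

lemma lt_quantile (hc : c < 1) (hx : cdf μ x < c) : x < quantile μ c := by
  obtain ⟨z, hz⟩ := ((tendsto_cdf_atTop μ).eventually (lt_mem_nhds hc)).exists
  by_contra! hqx
  exact (le_cdf_quantile hz.le |>.trans (monotone_cdf μ hqx)).not_gt hx

lemma measureReal_Iio_eq_leftLim_cdf [IsProbabilityMeasure μ] (x : ℝ) :
    μ.real (Iio x) = Function.leftLim (cdf μ) x := by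
  conv_lhs => rw [← measure_cdf μ]
  rw [measureReal_def, StieltjesFunction.measure_Iio _ (tendsto_cdf_atBot μ), sub_zero,
    ENNReal.toReal_ofReal]
  exact (cdf_nonneg μ (x - 1)).trans ((monotone_cdf μ).le_leftLim (sub_one_lt x))

lemma measureReal_Iio_quantile_le [IsProbabilityMeasure μ] (hc : 0 < c) :
    μ.real (Iio (quantile μ c)) ≤ c := by
  rw [measureReal_Iio_eq_leftLim_cdf]
  refine le_of_tendsto ((monotone_cdf μ).tendsto_leftLim _)
    (eventually_nhdsWithin_of_forall fun y hy => le_of_not_gt fun hcy => ?_)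
  exact (quantile_le hc hcy.le).not_gt hy

end ProbabilityTheory

lemma abs_sub_le_of_bracket {f g fa fb ga gb : ℝ} (hfa : fa ≤ f) (hfb : f ≤ fb) (hga : ga ≤ g)
    (hgb : g ≤ gb) : |f - g| ≤ (fb - fa) + |fa - ga| + |fb - gb| := by
  have := le_abs_self (fa - ga)
  have := le_abs_self (fb - gb)
  have := neg_abs_le (fa - ga)
  have := neg_abs_le (fb - gb)
  rw [abs_le]
  constructor <;> linarith

lemma exists_nat_div_bracket {x : ℝ} (hx0 : 0 ≤ x) {m : ℕ} (hm : 0 < m) :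
    ∃ j < m, (j : ℝ) / m ≤ x ∧ (((j + 1 : ℕ) : ℝ) / m < 1 → x < ((j + 1 : ℕ) : ℝ) / m) := by
  have hm' : (0 : ℝ) < m := by exact_mod_cast hm
  refine ⟨min ⌊m * x⌋₊ (m - 1), by omega, ?_, fun hlt => ?_⟩
  · rw [div_le_iff₀ hm', mul_comm]
    exact (Nat.cast_le.mpr (min_le_left _ _)).trans (Nat.floor_le (by positivity))
  · have hj : min ⌊m * x⌋₊ (m - 1) = ⌊m * x⌋₊ := by
      rw [div_lt_one hm', Nat.cast_lt] at hlt
      omega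
    rw [hj, lt_div_iff₀ hm', mul_comm]
    exact_mod_cast Nat.lt_floor_add_one _

section Polya

variable {μ : Measure ℝ}

lemma exists_lower_bracket_cdf {G : Set ℝ → ℝ} (hG : Monotone G) (hG0 : ∀ S, 0 ≤ G S) {c δ y : ℝ}
    (hc : 0 ≤ c) (hcy : c ≤ cdf μ y)
    (hq : |cdf μ (quantile μ c) - G (Iic (quantile μ c))| < δ) :
    ∃ a b, a ≤ cdf μ y ∧ b ≤ G (Iic y) ∧ c ≤ a ∧ |a - b| < δ := by
  rcases hc.eq_or_lt with rfl | hc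
  · exact ⟨0, 0, cdf_nonneg μ y, hG0 _, le_rfl, by simpa using (abs_nonneg _).trans_lt hq⟩
  · have hqy := quantile_le hc hcy
    exact ⟨_, _, monotone_cdf μ hqy, hG (Iic_subset_Iic.mpr hqy), le_cdf_quantile hcy, hq⟩

lemma exists_upper_bracket_cdf [IsProbabilityMeasure μ] {G : Set ℝ → ℝ} (hG : Monotone G)
    (hG1 : ∀ S, G S ≤ 1) {c δ y : ℝ} (hc : c ≤ 1) (hyc : c < 1 → cdf μ y < c)
    (hq : |μ.real (Iio (quantile μ c)) - G (Iio (quantile μ c))| < δ) :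
    ∃ a b, cdf μ y ≤ a ∧ G (Iic y) ≤ b ∧ a ≤ c ∧ |a - b| < δ := by
  rcases hc.lt_or_eq with hc | rfl
  · have hyq := lt_quantile hc (hyc hc)
    refine ⟨_, _, ?_, hG (Iic_subset_Iio.mpr hyq),
      measureReal_Iio_quantile_le ((cdf_nonneg μ y).trans_lt (hyc hc)), hq⟩
    rw [cdf_eq_real]
    exact measureReal_mono (Iic_subset_Iio.mpr hyq)
  · exact ⟨1, 1, cdf_le_one μ y, hG1 _, le_rfl, by simpa using (abs_nonneg _).trans_lt hq⟩

theorem tendstoUniformly_cdf_of_tendsto_quantile [IsProbabilityMeasure μ] {G : ℕ → Set ℝ → ℝ}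
    (hG : ∀ n, Monotone (G n)) (hG0 : ∀ n S, 0 ≤ G n S) (hG1 : ∀ n S, G n S ≤ 1)
    (hIic : ∀ m j : ℕ, Tendsto (fun n => G n (Iic (quantile μ (j / m)))) atTop
      (𝓝 (cdf μ (quantile μ (j / m)))))
    (hIio : ∀ m j : ℕ, Tendsto (fun n => G n (Iio (quantile μ (j / m)))) atTop
      (𝓝 (μ.real (Iio (quantile μ (j / m)))))) :
    TendstoUniformly (fun n y => G n (Iic y)) (cdf μ) atTop := by
  rw [Metric.tendstoUniformly_iff]
  intro ε hε
  obtain ⟨m, hm⟩ := exists_nat_gt (3 / ε)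
  have hm0 : (0 : ℝ) < m := (by positivity : 0 < 3 / ε).trans hm
  have hclose : ∀ᶠ n in atTop, ∀ j ∈ Finset.range (m + 1),
      |cdf μ (quantile μ (j / m)) - G n (Iic (quantile μ (j / m)))| < ε / 3 ∧
      |μ.real (Iio (quantile μ (j / m))) - G n (Iio (quantile μ (j / m)))| < ε / 3 := by
    refine (eventually_all_finset _).2 fun j _ => ?_
    have hε3 : 0 < ε / 3 := by positivity
    filter_upwards [(hIic m j).eventually (Metric.ball_mem_nhds _ hε3),
      (hIio m j).eventually (Metric.ball_mem_nhds _ hε3)] with n h1 h2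
    exact ⟨by rwa [abs_sub_comm], by rwa [abs_sub_comm]⟩
  filter_upwards [hclose] with n hn y
  obtain ⟨j, hjm, hlow, hup⟩ :=
    exists_nat_div_bracket (cdf_nonneg μ y) (Nat.cast_pos.mp hm0)
  obtain ⟨fa, ga, hfa, hga, hjfa, hfga⟩ :=
    exists_lower_bracket_cdf (hG n) (hG0 n) (by positivity) hlow (hn j (by simp; omega)).1
  obtain ⟨fb, gb, hfb, hgb, hfbj, hfgb⟩ := exists_upper_bracket_cdf (hG n) (hG1 n)
    (div_le_one_of_le₀ (by exact_mod_cast hjm) hm0.le) hup (hn (j + 1) (by simp; omega)).2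
  have hstep : ((j + 1 : ℕ) : ℝ) / m - j / m = 1 / m := by push_cast; ring
  have hmε : 1 / (m : ℝ) < ε / 3 := by
    rw [div_lt_iff₀ hm0]; rw [div_lt_iff₀ hε] at hm; linarith
  rw [Real.dist_eq]
  calc |cdf μ y - G n (Iic y)| ≤ (fb - fa) + |fa - ga| + |fb - gb| :=
        abs_sub_le_of_bracket hfa hfb hga hgb
    _ < ε / 3 + ε / 3 + ε / 3 := by gcongr; linarith
    _ = ε := by ring

end Polya

section Empirical

variable {α : Type*}

noncomputable def empFreq (x : ℕ → α) (n : ℕ) (S : Set α) : ℝ :=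
  (∑ k ∈ Finset.range n, S.indicator 1 (x k)) / (n + 1)

lemma monotone_empFreq (x : ℕ → α) (n : ℕ) : Monotone (empFreq x n) := fun _ _ hST =>
  div_le_div_of_nonneg_right
    (Finset.sum_le_sum fun _ _ => indicator_le_indicator_of_subset hST (fun _ => zero_le_one) _)
    (by positivity)

lemma empFreq_nonneg (x : ℕ → α) (n : ℕ) (S : Set α) : 0 ≤ empFreq x n S :=
  div_nonneg (Finset.sum_nonneg fun _ _ => indicator_nonneg (fun _ _ => zero_le_one) _)
    (by positivity)

lemma empFreq_le_one (x : ℕ → α) (n : ℕ) (S : Set α) : empFreq x n S ≤ 1 := by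
  refine (monotone_empFreq x n (subset_univ S)).trans ?_
  simp [empFreq, div_le_one (by positivity : (0 : ℝ) < n + 1)]

lemma empCdf_eq_empFreq {Ω : Type*} (Y : ℕ → Ω → ℝ) (n : ℕ) (ω : Ω) (y : ℝ) :
    empCdf Y n ω y = empFreq (Y · ω) n (Iic y) := by
  simp [empCdf, empFreq, indicator_apply]

lemma empCdf_mem_Icc {Ω : Type*} (Y : ℕ → Ω → ℝ) (n : ℕ) (ω : Ω) (y : ℝ) :
    empCdf Y n ω y ∈ Icc 0 1 := by
  rw [empCdf_eq_empFreq]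
  exact ⟨empFreq_nonneg _ n _, empFreq_le_one _ n _⟩

end Empirical

section StrongLaw

variable {Ω α : Type*} [MeasureSpace Ω] [IsProbabilityMeasure (ℙ : Measure Ω)]
  [MeasurableSpace α] {Y : ℕ → Ω → α}

lemma rvCdf_eq_cdf_map {Z : Ω → ℝ} (hZ : AEMeasurable Z) : rvCdf Z = cdf (Measure.map Z ℙ) := by
  have := Measure.isProbabilityMeasure_map (μ := ℙ) hZ
  ext y
  rw [cdf_eq_real, map_measureReal_apply_of_aemeasurable hZ measurableSet_Iic]
  rfl

theorem ae_tendsto_average_of_bounded (hindep : Pairwise fun i j => IndepFun (Y i) (Y j) ℙ)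
    (hident : ∀ k, IdentDistrib (Y k) (Y 0) ℙ ℙ) {φ : α → ℝ} (hφ : Measurable φ) {C : ℝ}
    (hC : ∀ x, ‖φ x‖ ≤ C) :
    ∀ᵐ ω, Tendsto (fun n : ℕ => (∑ k ∈ Finset.range n, φ (Y k ω)) / n) atTop
      (𝓝 (∫ ω, φ (Y 0 ω))) :=
  strong_law_ae_real (fun k ω => φ (Y k ω))
    (.of_bound (hφ.comp_aemeasurable (hident 0).aemeasurable_fst).aestronglyMeasurable C
      (ae_of_all _ fun _ => hC _))
    (fun _ _ hij => (hindep hij).comp hφ hφ) (fun k => (hident k).comp hφ)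

theorem ae_tendsto_empFreq (hindep : Pairwise fun i j => IndepFun (Y i) (Y j) ℙ)
    (hident : ∀ k, IdentDistrib (Y k) (Y 0) ℙ ℙ) {S : Set α} (hS : MeasurableSet S) :
    ∀ᵐ ω, Tendsto (fun n => empFreq (Y · ω) n S) atTop (𝓝 ((Measure.map (Y 0) ℙ).real S)) := by
  have hint : ∫ ω, S.indicator 1 (Y 0 ω) = (Measure.map (Y 0) ℙ).real S := by
    rw [← integral_map (hident 0).aemeasurable_fst
      (measurable_one.indicator hS).aestronglyMeasurable, integral_indicator_one hS]
  have hLLN := ae_tendsto_average_of_bounded hindep hident (measurable_one.indicator hS)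
    (C := 1) fun x => by by_cases hx : x ∈ S <;> simp [hx]
  filter_upwards [hLLN] with ω hω
  have hlim := hω.mul (tendsto_natCast_div_add_atTop (1 : ℝ))
  rw [hint, mul_one] at hlim
  refine hlim.congr' ((eventually_ne_atTop 0).mono fun n hn => ?_)
  have hn' : (n : ℝ) ≠ 0 := Nat.cast_ne_zero.mpr hn
  simp only [empFreq]
  field_simp

theorem ae_tendstoUniformly_empCdf {Y : ℕ → Ω → ℝ}
    (hindep : Pairwise fun i j => IndepFun (Y i) (Y j) ℙ)
    (hident : ∀ k, IdentDistrib (Y k) (Y 0) ℙ ℙ) :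
    ∀ᵐ ω, TendstoUniformly (fun n => empCdf Y n ω) (cdf (Measure.map (Y 0) ℙ)) atTop := by
  set μ := Measure.map (Y 0) ℙ
  have : IsProbabilityMeasure μ := Measure.isProbabilityMeasure_map (hident 0).aemeasurable_fst
  have hIic : ∀ᵐ ω, ∀ m j : ℕ, Tendsto (fun n => empFreq (Y · ω) n
      (Iic (quantile μ (j / m)))) atTop (𝓝 (cdf μ (quantile μ (j / m)))) := by
    simp only [ae_all_iff, cdf_eq_real]
    exact fun m j => ae_tendsto_empFreq hindep hident measurableSet_Iic
  have hIio : ∀ᵐ ω, ∀ m j : ℕ, Tendsto (fun n => empFreq (Y · ω) n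
      (Iio (quantile μ (j / m)))) atTop (𝓝 (μ.real (Iio (quantile μ (j / m))))) := by
    simp only [ae_all_iff]
    exact fun m j => ae_tendsto_empFreq hindep hident measurableSet_Iio
  filter_upwards [hIic, hIio] with ω hω₁ hω₂
  simp only [funext (empCdf_eq_empFreq Y _ ω)]
  exact tendstoUniformly_cdf_of_tendsto_quantile (monotone_empFreq _) (empFreq_nonneg _)
    (empFreq_le_one _) hω₁ hω₂

end StrongLaw

lemma tendsto_average_sub_of_tendstoUniformly {β : Type*} {F : ℕ → β → ℝ} {f : β → ℝ}
    (h : TendstoUniformly F f atTop) (x : ℕ → β) :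
    Tendsto (fun n : ℕ => (∑ k ∈ Finset.range n, F n (x k)) / n
      - (∑ k ∈ Finset.range n, f (x k)) / n) atTop (𝓝 0) := by
  rw [Metric.tendstoUniformly_iff] at h
  refine (NormedAddGroup.tendsto_nhds_zero).2 fun ε hε => ?_
  filter_upwards [h (ε / 2) (by positivity), eventually_gt_atTop 0] with n hn hn0
  have hn' : (0 : ℝ) < n := Nat.cast_pos.mpr hn0
  rw [← sub_div, ← Finset.sum_sub_distrib, norm_div, Real.norm_natCast, div_lt_iff₀ hn']
  calc ‖∑ k ∈ Finset.range n, (F n (x k) - f (x k))‖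
      ≤ ∑ _k ∈ Finset.range n, ε / 2 :=
        norm_sum_le_of_le _ fun k _ => by rw [← dist_eq_norm, dist_comm]; exact (hn _).le
    _ = ε / 2 * n := by simp [mul_comm]
    _ < ε * n := by gcongr; linarith

theorem stmt_3_general {Ω : Type*} [MeasureSpace Ω] [IsProbabilityMeasure (ℙ : Measure Ω)]
    (X Y : ℕ → Ω → ℝ)
    (hindep : iIndepFun (fun k ω => (X k ω, Y k ω)) ℙ)
    (hident : ∀ k, IdentDistrib (fun ω => (X k ω, Y k ω)) (fun ω => (X 0 ω, Y 0 ω)) ℙ ℙ)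
    (w : ℝ → ℝ) (hw : ContinuousOn w (Icc 0 1)) :
    ∀ᵐ ω ∂ℙ, Tendsto
      (fun n => (∑ k ∈ Finset.range n, w (empCdf Y n ω (Y k ω))) / (n : ℝ))
      atTop (𝓝 (∫ ω, w (rvCdf (Y 0) (Y 0 ω)))) := by
  have hYindep : Pairwise fun i j => IndepFun (Y i) (Y j) ℙ := fun _ _ hij =>
    (hindep.indepFun hij).comp measurable_snd measurable_snd
  have hYident : ∀ k, IdentDistrib (Y k) (Y 0) ℙ ℙ := fun k => (hident k).comp measurable_snd
  set μ := Measure.map (Y 0) ℙ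
  have hcdf : ∀ y, cdf μ y ∈ Icc (0 : ℝ) 1 := fun y => ⟨cdf_nonneg μ y, cdf_le_one μ y⟩
  have hwF : Measurable fun y => w (cdf μ y) :=
    hw.domRestrict.measurable.comp ((monotone_cdf _).measurable.subtype_mk (h := hcdf))
  obtain ⟨C, hC⟩ := isCompact_Icc.exists_bound_of_continuousOn hw
  filter_upwards [ae_tendstoUniformly_empCdf hYindep hYident,
    ae_tendsto_average_of_bounded hYindep hYident hwF fun y => hC _ (hcdf y)] with ω hGC hLLN
  have hwGC := (isCompact_Icc.uniformContinuousOn_of_continuous hw).comp_tendstoUniformly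
    (empCdf_mem_Icc Y · ω) hcdf hGC
  rw [rvCdf_eq_cdf_map (hYident 0).aemeasurable_fst]
  simpa only [sub_add_cancel, zero_add] using
    (tendsto_average_sub_of_tendstoUniformly hwGC (Y · ω)).add hLLN

/-- For i.i.d. pairs `(X_k, Y_k)` with `E[X]`, `E[Y²]`, `E[XY]` finite and `w` continuous
on `[0,1]`, the average `(1/n) Σ w(F̂_n(Y_k))` converges a.s. to `E[w(F_Y(Y))]`. -/
theorem stmt_3 {Ω : Type*} [MeasureSpace Ω] [IsProbabilityMeasure (ℙ : Measure Ω)]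
    (X Y : ℕ → Ω → ℝ) (hmeas : ∀ k, Measurable fun ω => (X k ω, Y k ω))
    (hindep : iIndepFun (fun k ω => (X k ω, Y k ω)) ℙ)
    (hident : ∀ k, IdentDistrib (fun ω => (X k ω, Y k ω)) (fun ω => (X 0 ω, Y 0 ω)) ℙ ℙ)
    (hXint : Integrable (X 0))
    (hY2int : Integrable (fun ω => Y 0 ω ^ 2))
    (hXYint : Integrable (fun ω => X 0 ω * Y 0 ω))
    (w : ℝ → ℝ) (hw : ContinuousOn w (Icc 0 1)) :
    ∀ᵐ ω ∂ℙ, Tendsto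
      (fun n => (∑ k ∈ Finset.range n, w (empCdf Y n ω (Y k ω))) / (n : ℝ))
      atTop (𝓝 (∫ ω, w (rvCdf (Y 0) (Y 0 ω)))) :=
  stmt_3_general X Y hindep hident w hw
end
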